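/- arXiv:2111.08698 — 2 statements merged into one kernel-verified Lean document; each statement's English description precedes it below -/
import Mathlib

section
/- For every randomized social choice function f for 7 voters and 7 candidates (a map assigning to every preference profile σ on C = {1,...,7}, F = {a,b,c,d,e,f,g} a probability distribution f(σ) on F), distortion(f) := sup_σ sup_{d ◁ σ, OPT(d)>0} cost_d(f(σ))/OPT(d) is strictly greater than 2. Hence the conjecture that some randomized social choice function achieves worst-case metric distortion at most 2 is false. -/
/-- Points of the instance: `Sum.inl j` is client `j`, `Sum.inr i` is facility `i`. -/
abbrev Pt := Fin 7 ⊕ Fin 7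

/-- `d` is a pseudometric: nonnegative, symmetric, zero on the diagonal,
and satisfying the triangle inequality `d x y ≤ d x z + d y z`. -/
def IsPseudometric (d : Pt → Pt → ℝ) : Prop :=
  (∀ x y, 0 ≤ d x y) ∧ (∀ x y, d x y = d y x) ∧ (∀ x, d x x = 0) ∧
    (∀ x y z, d x y ≤ d x z + d y z)

/-- Rank function of the instance `I*` (facilities `a,…,g` are `0,…,6`):
clients 1,2,3 rank c ≻ e ≻ b ≻ a ≻ f ≻ g ≻ d, clients 4,5,6 rank
d ≻ g ≻ f ≻ a ≻ e ≻ b ≻ c, client 7 ranks b ≻ a ≻ f ≻ g ≻ e ≻ c ≻ d. -/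
def rkStar (j : Fin 7) : Fin 7 → ℕ :=
  if j.val ≤ 2 then ![3, 2, 0, 6, 1, 4, 5]
  else if j.val ≤ 5 then ![3, 5, 6, 0, 4, 2, 1]
  else ![1, 0, 5, 6, 4, 2, 3]

/-- The preference profile `σ*` of the instance `I*`: `a ≽_j b` iff `a` has
(weakly) smaller rank than `b` in client `j`'s list. -/
def sigmaStar (j : Fin 7) (a b : Fin 7) : Prop := rkStar j a ≤ rkStar j b

/-- `d` is consistent with the profile `σ`: whenever client `j` prefers `a` to `b`,
facility `a` is at least as close to `j` as `b`. -/
def Consistent (d : Pt → Pt → ℝ) (σ : Fin 7 → Fin 7 → Fin 7 → Prop) : Prop :=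
  ∀ j a b, σ j a b → d (Sum.inr a) (Sum.inl j) ≤ d (Sum.inr b) (Sum.inl j)

/-- Expected social cost of the distribution `q` under metric `d`. -/
def cost (d : Pt → Pt → ℝ) (q : Fin 7 → ℝ) : ℝ :=
  ∑ i, q i * ∑ j, d (Sum.inr i) (Sum.inl j)

/-- Total cost of the clients if facility `o` is chosen. -/
def facCost (d : Pt → Pt → ℝ) (o : Fin 7) : ℝ :=
  ∑ j, d (Sum.inr o) (Sum.inl j)

/-- Optimal (minimum) total cost over all facilities. -/
noncomputable def OPT (d : Pt → Pt → ℝ) : ℝ :=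
  Finset.univ.inf' Finset.univ_nonempty (facCost d)

/- ### Auxiliary machinery -/

/-- Index of a point among the 14 points: clients are `0..6`, facilities `7..13`. -/
def idx : Pt → Fin 14 := Sum.elim (fun j => ⟨j.val, by omega⟩) (fun i => ⟨i.val + 7, by omega⟩)

/-- The real pseudometric induced by a natural-valued distance table on the 14 points. -/
def dM (M : Fin 14 → Fin 14 → ℕ) : Pt → Pt → ℝ := fun p q => (M (idx p) (idx q) : ℝ)

lemma pseudo_dM (M : Fin 14 → Fin 14 → ℕ)
    (hsymm : ∀ x y, M x y = M y x) (hdiag : ∀ x, M x x = 0)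
    (htri : ∀ x y z, M x y ≤ M x z + M y z) : IsPseudometric (dM M) := by
  refine ⟨fun x y => Nat.cast_nonneg _, fun x y => by simp [dM, hsymm (idx x) (idx y)],
    fun x => by simp [dM, hdiag], fun x y z => ?_⟩
  have := htri (idx x) (idx y) (idx z)
  unfold dM
  exact_mod_cast this

lemma cons_dM (M : Fin 14 → Fin 14 → ℕ)
    (h : ∀ j a b : Fin 7, rkStar j a ≤ rkStar j b →
      M (idx (Sum.inr a)) (idx (Sum.inl j)) ≤ M (idx (Sum.inr b)) (idx (Sum.inl j))) :
    Consistent (dM M) sigmaStar := fun j a b hab => by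
  have := h j a b hab
  unfold dM
  exact_mod_cast this

lemma facCost_dM (M : Fin 14 → Fin 14 → ℕ) (o : Fin 7) :
    facCost (dM M) o = ((∑ j : Fin 7, M (idx (Sum.inr o)) (idx (Sum.inl j)) : ℕ) : ℝ) := by
  simp [facCost, dM]

lemma cost_dM (M : Fin 14 → Fin 14 → ℕ) (q : Fin 7 → ℝ) :
    cost (dM M) q
      = ∑ i : Fin 7, q i * ((∑ j : Fin 7, M (idx (Sum.inr i)) (idx (Sum.inl j)) : ℕ) : ℝ) := by
  unfold cost
  refine Finset.sum_congr rfl fun i _ => ?_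
  rw [show (∑ j, dM M (Sum.inr i) (Sum.inl j)) = facCost (dM M) i from rfl, facCost_dM]

lemma OPT_dM (M : Fin 14 → Fin 14 → ℕ) (s : ℕ) (o0 : Fin 7)
    (h0 : (∑ j : Fin 7, M (idx (Sum.inr o0)) (idx (Sum.inl j))) = s)
    (hmin : ∀ o : Fin 7, s ≤ ∑ j : Fin 7, M (idx (Sum.inr o)) (idx (Sum.inl j))) :
    OPT (dM M) = (s : ℝ) := by
  apply le_antisymm
  · calc OPT (dM M) ≤ facCost (dM M) o0 := Finset.inf'_le _ (Finset.mem_univ _)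
      _ = (s : ℝ) := by rw [facCost_dM, h0]
  · apply Finset.le_inf'
    intro i _
    rw [facCost_dM]
    exact_mod_cast hmin i

/-- Distance table number 0. -/
def M0 : Fin 14 → Fin 14 → ℕ :=
  ![![0, 0, 0, 1, 1, 1, 1, 2, 2, 0, 2, 2, 2, 2],
   ![0, 0, 0, 1, 1, 1, 1, 2, 2, 0, 2, 2, 2, 2],
   ![0, 0, 0, 1, 1, 1, 1, 2, 2, 0, 2, 2, 2, 2],
   ![1, 1, 1, 0, 2, 2, 2, 1, 1, 1, 1, 1, 1, 1],
   ![1, 1, 1, 2, 0, 2, 2, 1, 1, 1, 1, 1, 1, 1],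
   ![1, 1, 1, 2, 2, 0, 2, 1, 1, 1, 1, 1, 1, 1],
   ![1, 1, 1, 2, 2, 2, 0, 1, 1, 1, 3, 1, 1, 1],
   ![2, 2, 2, 1, 1, 1, 1, 0, 2, 2, 2, 2, 2, 2],
   ![2, 2, 2, 1, 1, 1, 1, 2, 0, 2, 2, 2, 2, 2],
   ![0, 0, 0, 1, 1, 1, 1, 2, 2, 0, 2, 2, 2, 2],
   ![2, 2, 2, 1, 1, 1, 3, 2, 2, 2, 0, 2, 2, 2],
   ![2, 2, 2, 1, 1, 1, 1, 2, 2, 2, 2, 0, 2, 2],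
   ![2, 2, 2, 1, 1, 1, 1, 2, 2, 2, 2, 2, 0, 2],
   ![2, 2, 2, 1, 1, 1, 1, 2, 2, 2, 2, 2, 2, 0]]

/-- Distance table number 1. -/
def M1 : Fin 14 → Fin 14 → ℕ :=
  ![![0, 2, 2, 1, 1, 1, 2, 1, 1, 1, 1, 1, 1, 1],
   ![2, 0, 2, 1, 1, 1, 2, 1, 1, 1, 1, 1, 1, 1],
   ![2, 2, 0, 1, 1, 1, 2, 1, 1, 1, 1, 1, 1, 1],
   ![1, 1, 1, 0, 0, 0, 1, 2, 2, 2, 0, 2, 2, 2],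
   ![1, 1, 1, 0, 0, 0, 1, 2, 2, 2, 0, 2, 2, 2],
   ![1, 1, 1, 0, 0, 0, 1, 2, 2, 2, 0, 2, 2, 2],
   ![2, 2, 2, 1, 1, 1, 0, 1, 1, 1, 1, 1, 1, 1],
   ![1, 1, 1, 2, 2, 2, 1, 0, 2, 2, 2, 2, 2, 2],
   ![1, 1, 1, 2, 2, 2, 1, 2, 0, 2, 2, 2, 2, 2],
   ![1, 1, 1, 2, 2, 2, 1, 2, 2, 0, 2, 2, 2, 2],
   ![1, 1, 1, 0, 0, 0, 1, 2, 2, 2, 0, 2, 2, 2],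
   ![1, 1, 1, 2, 2, 2, 1, 2, 2, 2, 2, 0, 2, 2],
   ![1, 1, 1, 2, 2, 2, 1, 2, 2, 2, 2, 2, 0, 2],
   ![1, 1, 1, 2, 2, 2, 1, 2, 2, 2, 2, 2, 2, 0]]

/-- Distance table number 2. -/
def M2 : Fin 14 → Fin 14 → ℕ :=
  ![![0, 2, 2, 2, 2, 2, 1, 3, 1, 1, 3, 1, 3, 3],
   ![2, 0, 2, 2, 2, 2, 1, 3, 1, 1, 3, 1, 3, 3],
   ![2, 2, 0, 2, 2, 2, 1, 3, 1, 1, 3, 1, 3, 3],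
   ![2, 2, 2, 0, 2, 2, 1, 1, 1, 3, 1, 1, 1, 1],
   ![2, 2, 2, 2, 0, 2, 1, 1, 1, 3, 1, 1, 1, 1],
   ![2, 2, 2, 2, 2, 0, 1, 1, 1, 3, 1, 1, 1, 1],
   ![1, 1, 1, 1, 1, 1, 0, 2, 0, 2, 2, 2, 2, 2],
   ![3, 3, 3, 1, 1, 1, 2, 0, 2, 4, 2, 2, 2, 2],
   ![1, 1, 1, 1, 1, 1, 0, 2, 0, 2, 2, 2, 2, 2],
   ![1, 1, 1, 3, 3, 3, 2, 4, 2, 0, 4, 2, 4, 4],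
   ![3, 3, 3, 1, 1, 1, 2, 2, 2, 4, 0, 2, 2, 2],
   ![1, 1, 1, 1, 1, 1, 2, 2, 2, 2, 2, 0, 2, 2],
   ![3, 3, 3, 1, 1, 1, 2, 2, 2, 4, 2, 2, 0, 2],
   ![3, 3, 3, 1, 1, 1, 2, 2, 2, 4, 2, 2, 2, 0]]

/-- Distance table number 3. -/
def M3 : Fin 14 → Fin 14 → ℕ :=
  ![![0, 2, 2, 2, 2, 2, 2, 3, 3, 1, 3, 1, 3, 3],
   ![2, 0, 2, 2, 2, 2, 2, 3, 3, 1, 3, 1, 3, 3],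
   ![2, 2, 0, 2, 2, 2, 2, 3, 3, 1, 3, 1, 3, 3],
   ![2, 2, 2, 0, 2, 2, 2, 1, 3, 3, 1, 1, 1, 1],
   ![2, 2, 2, 2, 0, 2, 2, 1, 3, 3, 1, 1, 1, 1],
   ![2, 2, 2, 2, 2, 0, 2, 1, 3, 3, 1, 1, 1, 1],
   ![2, 2, 2, 2, 2, 2, 0, 1, 1, 3, 3, 1, 1, 1],
   ![3, 3, 3, 1, 1, 1, 1, 0, 2, 4, 2, 2, 2, 2],
   ![3, 3, 3, 3, 3, 3, 1, 2, 0, 4, 4, 2, 2, 2],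
   ![1, 1, 1, 3, 3, 3, 3, 4, 4, 0, 4, 2, 4, 4],
   ![3, 3, 3, 1, 1, 1, 3, 2, 4, 4, 0, 2, 2, 2],
   ![1, 1, 1, 1, 1, 1, 1, 2, 2, 2, 2, 0, 2, 2],
   ![3, 3, 3, 1, 1, 1, 1, 2, 2, 4, 2, 2, 0, 2],
   ![3, 3, 3, 1, 1, 1, 1, 2, 2, 4, 2, 2, 2, 0]]

/-- Distance table number 4. -/
def M4 : Fin 14 → Fin 14 → ℕ :=
  ![![0, 2, 2, 2, 2, 2, 2, 1, 1, 1, 3, 1, 3, 3],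
   ![2, 0, 2, 2, 2, 2, 2, 1, 1, 1, 3, 1, 3, 3],
   ![2, 2, 0, 2, 2, 2, 2, 1, 1, 1, 3, 1, 3, 3],
   ![2, 2, 2, 0, 2, 2, 2, 1, 3, 3, 1, 3, 1, 1],
   ![2, 2, 2, 2, 0, 2, 2, 1, 3, 3, 1, 3, 1, 1],
   ![2, 2, 2, 2, 2, 0, 2, 1, 3, 3, 1, 3, 1, 1],
   ![2, 2, 2, 2, 2, 2, 0, 1, 1, 3, 3, 3, 3, 3],
   ![1, 1, 1, 1, 1, 1, 1, 0, 2, 2, 2, 2, 2, 2],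
   ![1, 1, 1, 3, 3, 3, 1, 2, 0, 2, 4, 2, 4, 4],
   ![1, 1, 1, 3, 3, 3, 3, 2, 2, 0, 4, 2, 4, 4],
   ![3, 3, 3, 1, 1, 1, 3, 2, 4, 4, 0, 4, 2, 2],
   ![1, 1, 1, 3, 3, 3, 3, 2, 2, 2, 4, 0, 4, 4],
   ![3, 3, 3, 1, 1, 1, 3, 2, 4, 4, 2, 4, 0, 2],
   ![3, 3, 3, 1, 1, 1, 3, 2, 4, 4, 2, 4, 2, 0]]

/-- Distance table number 5. -/
def M5 : Fin 14 → Fin 14 → ℕ :=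
  ![![0, 2, 2, 2, 2, 2, 2, 1, 1, 1, 3, 1, 1, 1],
   ![2, 0, 2, 2, 2, 2, 2, 1, 1, 1, 3, 1, 1, 1],
   ![2, 2, 0, 2, 2, 2, 2, 1, 1, 1, 3, 1, 1, 1],
   ![2, 2, 2, 0, 2, 2, 2, 3, 3, 3, 1, 3, 3, 1],
   ![2, 2, 2, 2, 0, 2, 2, 3, 3, 3, 1, 3, 3, 1],
   ![2, 2, 2, 2, 2, 0, 2, 3, 3, 3, 1, 3, 3, 1],
   ![2, 2, 2, 2, 2, 2, 0, 1, 1, 3, 3, 3, 1, 1],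
   ![1, 1, 1, 3, 3, 3, 1, 0, 2, 2, 4, 2, 2, 2],
   ![1, 1, 1, 3, 3, 3, 1, 2, 0, 2, 4, 2, 2, 2],
   ![1, 1, 1, 3, 3, 3, 3, 2, 2, 0, 4, 2, 2, 2],
   ![3, 3, 3, 1, 1, 1, 3, 4, 4, 4, 0, 4, 4, 2],
   ![1, 1, 1, 3, 3, 3, 3, 2, 2, 2, 4, 0, 2, 2],
   ![1, 1, 1, 3, 3, 3, 1, 2, 2, 2, 4, 2, 0, 2],
   ![1, 1, 1, 1, 1, 1, 1, 2, 2, 2, 2, 2, 2, 0]]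

/-- Distance table number 6. -/
def M6 : Fin 14 → Fin 14 → ℕ :=
  ![![0, 2, 2, 2, 2, 2, 2, 1, 1, 1, 3, 1, 1, 3],
   ![2, 0, 2, 2, 2, 2, 2, 1, 1, 1, 3, 1, 1, 3],
   ![2, 2, 0, 2, 2, 2, 2, 1, 1, 1, 3, 1, 1, 3],
   ![2, 2, 2, 0, 2, 2, 2, 3, 3, 3, 1, 3, 1, 1],
   ![2, 2, 2, 2, 0, 2, 2, 3, 3, 3, 1, 3, 1, 1],
   ![2, 2, 2, 2, 2, 0, 2, 3, 3, 3, 1, 3, 1, 1],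
   ![2, 2, 2, 2, 2, 2, 0, 1, 1, 3, 3, 3, 1, 3],
   ![1, 1, 1, 3, 3, 3, 1, 0, 2, 2, 4, 2, 2, 4],
   ![1, 1, 1, 3, 3, 3, 1, 2, 0, 2, 4, 2, 2, 4],
   ![1, 1, 1, 3, 3, 3, 3, 2, 2, 0, 4, 2, 2, 4],
   ![3, 3, 3, 1, 1, 1, 3, 4, 4, 4, 0, 4, 2, 2],
   ![1, 1, 1, 3, 3, 3, 3, 2, 2, 2, 4, 0, 2, 4],
   ![1, 1, 1, 1, 1, 1, 1, 2, 2, 2, 2, 2, 0, 2],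
   ![3, 3, 3, 1, 1, 1, 3, 4, 4, 4, 2, 4, 2, 0]]

lemma pseudo0 : IsPseudometric (dM M0) :=
  pseudo_dM _ (by decide) (by decide) (by decide)

lemma cons0 : Consistent (dM M0) sigmaStar :=
  cons_dM _ (by decide)

lemma OPT0 : OPT (dM M0) = (4 : ℝ) :=
  OPT_dM _ 4 2 (by decide) (by decide)

lemma cost0 (q : Fin 7 → ℝ) :
    cost (dM M0) q = q 0 * 10 + q 1 * 10 + q 2 * 4 + q 3 * 12 + q 4 * 10 + q 5 * 10 + q 6 * 10 := by
  rw [cost_dM, Fin.sum_univ_seven]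
  norm_num [show (∑ j : Fin 7, M0 (idx (Sum.inr 0)) (idx (Sum.inl j))) = 10 ∧ (∑ j : Fin 7, M0 (idx (Sum.inr 1)) (idx (Sum.inl j))) = 10 ∧ (∑ j : Fin 7, M0 (idx (Sum.inr 2)) (idx (Sum.inl j))) = 4 ∧ (∑ j : Fin 7, M0 (idx (Sum.inr 3)) (idx (Sum.inl j))) = 12 ∧ (∑ j : Fin 7, M0 (idx (Sum.inr 4)) (idx (Sum.inl j))) = 10 ∧ (∑ j : Fin 7, M0 (idx (Sum.inr 5)) (idx (Sum.inl j))) = 10 ∧ (∑ j : Fin 7, M0 (idx (Sum.inr 6)) (idx (Sum.inl j))) = 10 by decide]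

lemma pseudo1 : IsPseudometric (dM M1) :=
  pseudo_dM _ (by decide) (by decide) (by decide)

lemma cons1 : Consistent (dM M1) sigmaStar :=
  cons_dM _ (by decide)

lemma OPT1 : OPT (dM M1) = (4 : ℝ) :=
  OPT_dM _ 4 3 (by decide) (by decide)

lemma cost1 (q : Fin 7 → ℝ) :
    cost (dM M1) q = q 0 * 10 + q 1 * 10 + q 2 * 10 + q 3 * 4 + q 4 * 10 + q 5 * 10 + q 6 * 10 := by
  rw [cost_dM, Fin.sum_univ_seven]
  norm_num [show (∑ j : Fin 7, M1 (idx (Sum.inr 0)) (idx (Sum.inl j))) = 10 ∧ (∑ j : Fin 7, M1 (idx (Sum.inr 1)) (idx (Sum.inl j))) = 10 ∧ (∑ j : Fin 7, M1 (idx (Sum.inr 2)) (idx (Sum.inl j))) = 10 ∧ (∑ j : Fin 7, M1 (idx (Sum.inr 3)) (idx (Sum.inl j))) = 4 ∧ (∑ j : Fin 7, M1 (idx (Sum.inr 4)) (idx (Sum.inl j))) = 10 ∧ (∑ j : Fin 7, M1 (idx (Sum.inr 5)) (idx (Sum.inl j))) = 10 ∧ (∑ j : Fin 7, M1 (idx (Sum.inr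 6)) (idx (Sum.inl j))) = 10 by decide]

lemma pseudo2 : IsPseudometric (dM M2) :=
  pseudo_dM _ (by decide) (by decide) (by decide)

lemma cons2 : Consistent (dM M2) sigmaStar :=
  cons_dM _ (by decide)

lemma OPT2 : OPT (dM M2) = (6 : ℝ) :=
  OPT_dM _ 6 1 (by decide) (by decide)

lemma cost2 (q : Fin 7 → ℝ) :
    cost (dM M2) q = q 0 * 14 + q 1 * 6 + q 2 * 14 + q 3 * 14 + q 4 * 8 + q 5 * 14 + q 6 * 14 := by
  rw [cost_dM, Fin.sum_univ_seven]
  norm_num [show (∑ j : Fin 7, M2 (idx (Sum.inr 0)) (idx (Sum.inl j))) = 14 ∧ (∑ j : Fin 7, M2 (idx (Sum.inr 1)) (idx (Sum.inl j))) = 6 ∧ (∑ j : Fin 7, M2 (idx (Sum.inr 2)) (idx (Sum.inl j))) = 14 ∧ (∑ j : Fin 7, M2 (idx (Sum.inr 3)) (idx (Sum.inl j))) = 14 ∧ (∑ j : Fin 7, M2 (idx (Sum.inr 4)) (idx (Sum.inl j))) = 8 ∧ (∑ j : Fin 7, M2 (idx (Sum.inr 5)) (idx (Sum.inl j))) = 14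 ∧ (∑ j : Fin 7, M2 (idx (Sum.inr 6)) (idx (Sum.inl j))) = 14 by decide]

lemma pseudo3 : IsPseudometric (dM M3) :=
  pseudo_dM _ (by decide) (by decide) (by decide)

lemma cons3 : Consistent (dM M3) sigmaStar :=
  cons_dM _ (by decide)

lemma OPT3 : OPT (dM M3) = (7 : ℝ) :=
  OPT_dM _ 7 4 (by decide) (by decide)

lemma cost3 (q : Fin 7 → ℝ) :
    cost (dM M3) q = q 0 * 13 + q 1 * 19 + q 2 * 15 + q 3 * 15 + q 4 * 7 + q 5 * 13 + q 6 * 13 := by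
  rw [cost_dM, Fin.sum_univ_seven]
  norm_num [show (∑ j : Fin 7, M3 (idx (Sum.inr 0)) (idx (Sum.inl j))) = 13 ∧ (∑ j : Fin 7, M3 (idx (Sum.inr 1)) (idx (Sum.inl j))) = 19 ∧ (∑ j : Fin 7, M3 (idx (Sum.inr 2)) (idx (Sum.inl j))) = 15 ∧ (∑ j : Fin 7, M3 (idx (Sum.inr 3)) (idx (Sum.inl j))) = 15 ∧ (∑ j : Fin 7, M3 (idx (Sum.inr 4)) (idx (Sum.inl j))) = 7 ∧ (∑ j : Fin 7, M3 (idx (Sum.inr 5)) (idx (Sum.inl j))) = 13 ∧ (∑ j : Fin 7, M3 (idx (Sum.inr 6)) (idx (Sum.inl j))) = 13 by decide]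

lemma pseudo4 : IsPseudometric (dM M4) :=
  pseudo_dM _ (by decide) (by decide) (by decide)

lemma cons4 : Consistent (dM M4) sigmaStar :=
  cons_dM _ (by decide)

lemma OPT4 : OPT (dM M4) = (7 : ℝ) :=
  OPT_dM _ 7 0 (by decide) (by decide)

lemma cost4 (q : Fin 7 → ℝ) :
    cost (dM M4) q = q 0 * 7 + q 1 * 13 + q 2 * 15 + q 3 * 15 + q 4 * 15 + q 5 * 15 + q 6 * 15 := by
  rw [cost_dM, Fin.sum_univ_seven]
  norm_num [show (∑ j : Fin 7, M4 (idx (Sum.inr 0)) (idx (Sum.inl j))) = 7 ∧ (∑ j : Fin 7, M4 (idx (Sum.inr 1)) (idx (Sum.inl j))) = 13 ∧ (∑ j : Fin 7, M4 (idx (Sum.inr 2)) (idx (Sum.inl j))) = 15 ∧ (∑ j : Fin 7, M4 (idx (Sum.inr 3)) (idx (Sum.inl j))) = 15 ∧ (∑ j : Fin 7, M4 (idx (Sum.inr 4)) (idx (Sum.inl j))) = 15 ∧ (∑ j : Fin 7, M4 (idx (Sum.inr 5)) (idx (Sum.inl j))) = 15 ∧ (∑ j : Fin 7, M4 (idx (Sum.inr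 6)) (idx (Sum.inl j))) = 15 by decide]

lemma pseudo5 : IsPseudometric (dM M5) :=
  pseudo_dM _ (by decide) (by decide) (by decide)

lemma cons5 : Consistent (dM M5) sigmaStar :=
  cons_dM _ (by decide)

lemma OPT5 : OPT (dM M5) = (7 : ℝ) :=
  OPT_dM _ 7 6 (by decide) (by decide)

lemma cost5 (q : Fin 7 → ℝ) :
    cost (dM M5) q = q 0 * 13 + q 1 * 13 + q 2 * 15 + q 3 * 15 + q 4 * 15 + q 5 * 13 + q 6 * 7 := by
  rw [cost_dM, Fin.sum_univ_seven]
  norm_num [show (∑ j : Fin 7, M5 (idx (Sum.inr 0)) (idx (Sum.inl j))) = 13 ∧ (∑ j : Fin 7, M5 (idx (Sum.inr 1)) (idx (Sum.inl j))) = 13 ∧ (∑ j : Fin 7, M5 (idx (Sum.inr 2)) (idx (Sum.inl j))) = 15 ∧ (∑ j : Fin 7, M5 (idx (Sum.inr 3)) (idx (Sum.inl j))) = 15 ∧ (∑ j : Fin 7, M5 (idx (Sum.inr 4)) (idx (Sum.inl j))) = 15 ∧ (∑ j : Fin 7, M5 (idx (Sum.inr 5)) (idx (Sum.inl j))) = 13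 ∧ (∑ j : Fin 7, M5 (idx (Sum.inr 6)) (idx (Sum.inl j))) = 7 by decide]

lemma pseudo6 : IsPseudometric (dM M6) :=
  pseudo_dM _ (by decide) (by decide) (by decide)

lemma cons6 : Consistent (dM M6) sigmaStar :=
  cons_dM _ (by decide)

lemma OPT6 : OPT (dM M6) = (7 : ℝ) :=
  OPT_dM _ 7 5 (by decide) (by decide)

lemma cost6 (q : Fin 7 → ℝ) :
    cost (dM M6) q = q 0 * 13 + q 1 * 13 + q 2 * 15 + q 3 * 15 + q 4 * 15 + q 5 * 7 + q 6 * 15 := by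
  rw [cost_dM, Fin.sum_univ_seven]
  norm_num [show (∑ j : Fin 7, M6 (idx (Sum.inr 0)) (idx (Sum.inl j))) = 13 ∧ (∑ j : Fin 7, M6 (idx (Sum.inr 1)) (idx (Sum.inl j))) = 13 ∧ (∑ j : Fin 7, M6 (idx (Sum.inr 2)) (idx (Sum.inl j))) = 15 ∧ (∑ j : Fin 7, M6 (idx (Sum.inr 3)) (idx (Sum.inl j))) = 15 ∧ (∑ j : Fin 7, M6 (idx (Sum.inr 4)) (idx (Sum.inl j))) = 15 ∧ (∑ j : Fin 7, M6 (idx (Sum.inr 5)) (idx (Sum.inl j))) = 7 ∧ (∑ j : Fin 7, M6 (idx (Sum.inr 6)) (idx (Sum.inl j))) = 15 by decide]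

lemma rk_antisymm : ∀ j a b : Fin 7, rkStar j a ≤ rkStar j b → rkStar j b ≤ rkStar j a → a = b := by
  decide

lemma sigmaStar_linear : ∀ j, IsLinearOrder (Fin 7) (sigmaStar j) := fun j =>
  { refl := fun a => le_refl _
    trans := fun a b c hab hbc => le_trans hab hbc
    antisymm := fun a b h1 h2 => rk_antisymm j a b h1 h2
    total := fun a b => Nat.le_total _ _ }

/-- every randomized social choice function `f` for 7 voters and 7
candidates has distortion strictly greater than 2: there are a profile `σ` and a
pseudometric `d` consistent with `σ` with `OPT d > 0` on which
`cost d (f σ) > 2 · OPT d`.  This refutes the conjecture that some randomized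
social choice function achieves worst-case metric distortion at most 2. -/
theorem distortion_strictly_greater_than_two
    (f : {σ : Fin 7 → Fin 7 → Fin 7 → Prop // ∀ j, IsLinearOrder (Fin 7) (σ j)} →
        Fin 7 → ℝ)
    (hf0 : ∀ σ i, 0 ≤ f σ i) (hf1 : ∀ σ, ∑ i, f σ i = 1) :
    ∃ σ : {σ : Fin 7 → Fin 7 → Fin 7 → Prop // ∀ j, IsLinearOrder (Fin 7) (σ j)},
      ∃ d : Pt → Pt → ℝ, IsPseudometric d ∧ Consistent d σ.1 ∧
        0 < OPT d ∧ 2 * OPT d < cost d (f σ) := by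
  set σs : {σ : Fin 7 → Fin 7 → Fin 7 → Prop // ∀ j, IsLinearOrder (Fin 7) (σ j)} :=
    ⟨sigmaStar, sigmaStar_linear⟩ with hσs
  set q : Fin 7 → ℝ := f σs with hq
  have hq1 : q 0 + q 1 + q 2 + q 3 + q 4 + q 5 + q 6 = 1 := by
    have := hf1 σs
    rwa [Fin.sum_univ_seven] at this

  rcases lt_or_ge (2 * ((4 : ℕ) : ℝ)) (cost (dM M0) q) with h0 | h0
  · exact ⟨σs, dM M0, pseudo0, cons0, by rw [OPT0]; norm_num, by rw [OPT0]; exact_mod_cast h0⟩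
  rcases lt_or_ge (2 * ((4 : ℕ) : ℝ)) (cost (dM M1) q) with h1 | h1
  · exact ⟨σs, dM M1, pseudo1, cons1, by rw [OPT1]; norm_num, by rw [OPT1]; exact_mod_cast h1⟩
  rcases lt_or_ge (2 * ((6 : ℕ) : ℝ)) (cost (dM M2) q) with h2 | h2
  · exact ⟨σs, dM M2, pseudo2, cons2, by rw [OPT2]; norm_num, by rw [OPT2]; exact_mod_cast h2⟩
  rcases lt_or_ge (2 * ((7 : ℕ) : ℝ)) (cost (dM M3) q) with h3 | h3
  · exact ⟨σs, dM M3, pseudo3, cons3, by rw [OPT3]; norm_num, by rw [OPT3]; exact_mod_cast h3⟩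
  rcases lt_or_ge (2 * ((7 : ℕ) : ℝ)) (cost (dM M4) q) with h4 | h4
  · exact ⟨σs, dM M4, pseudo4, cons4, by rw [OPT4]; norm_num, by rw [OPT4]; exact_mod_cast h4⟩
  rcases lt_or_ge (2 * ((7 : ℕ) : ℝ)) (cost (dM M5) q) with h5 | h5
  · exact ⟨σs, dM M5, pseudo5, cons5, by rw [OPT5]; norm_num, by rw [OPT5]; exact_mod_cast h5⟩
  rcases lt_or_ge (2 * ((7 : ℕ) : ℝ)) (cost (dM M6) q) with h6 | h6
  · exact ⟨σs, dM M6, pseudo6, cons6, by rw [OPT6]; norm_num, by rw [OPT6]; exact_mod_cast h6⟩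
  exfalso
  rw [cost0] at h0
  rw [cost1] at h1
  rw [cost2] at h2
  rw [cost3] at h3
  rw [cost4] at h4
  rw [cost5] at h5
  rw [cost6] at h6
  push_cast at h0 h1 h2 h3 h4 h5 h6
  linarith
end

section
/- Let M_e = 0.013433 and define d^e on C ∪ F as M_e times the (unweighted) graph distance between blocks in the graph whose vertices are the blocks {d}, B2 = {4,5,6}, {a,f,g}, {e}, {7}, {b}, B1 = {1,2,3}, {c} and whose edges are d–B2, B2–{a,f,g}, B2–e, {a,f,g}–7, 7–b, 7–e, B1–e, B1–c (points in the same block are at distance 0). Then d^e is a pseudometric on C ∪ F, d^e is consistent with σ*, Σ_{j∈C} d^e(e,j) = 7·M_e > 0, and facility e minimizes Σ_{j∈C} d^e(o,j) over o ∈ F. -/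
/-- The block graph for `d^e`: vertices are the blocks
`0 = {d}`, `1 = B2 = {4,5,6}`, `2 = {a,f,g}`, `3 = {e}`, `4 = {7}`, `5 = {b}`,
`6 = B1 = {1,2,3}`, `7 = {c}`, with edges d–B2, B2–{a,f,g}, B2–e, {a,f,g}–7,
7–b, 7–e, B1–e, B1–c. -/
def graphE : SimpleGraph (Fin 8) :=
  SimpleGraph.fromRel (fun u v =>
    (u, v) ∈ ([(0, 1), (1, 2), (1, 3), (2, 4), (4, 5), (4, 3), (6, 3), (6, 7)] :
      List (Fin 8 × Fin 8)))

/-- The block of each point (clients 1,2,3 ↦ B1, clients 4,5,6 ↦ B2,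
client 7 ↦ {7}; facilities a,f,g ↦ {a,f,g}, b ↦ {b}, c ↦ {c}, d ↦ {d}, e ↦ {e}). -/
def blkE : Pt → Fin 8
  | Sum.inl j => if j.val ≤ 2 then 6 else if j.val ≤ 5 then 1 else 4
  | Sum.inr i => ![2, 5, 7, 0, 3, 2, 2] i

/-- `d^e` is `M_e = 0.013433` times the graph distance between the blocks of the
two points (points in the same block are at distance 0). -/
noncomputable def dE : Pt → Pt → ℝ :=
  fun x y => 0.013433 * (graphE.dist (blkE x) (blkE y) : ℝ)

/-- Explicit distance matrix of `graphE`. -/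
def Dm : Fin 8 → Fin 8 → ℕ :=
  ![![0, 1, 2, 2, 3, 4, 3, 4],
    ![1, 0, 1, 1, 2, 3, 2, 3],
    ![2, 1, 0, 2, 1, 2, 3, 4],
    ![2, 1, 2, 0, 1, 2, 1, 2],
    ![3, 2, 1, 1, 0, 1, 2, 3],
    ![4, 3, 2, 2, 1, 0, 3, 4],
    ![3, 2, 3, 1, 2, 3, 0, 1],
    ![4, 3, 4, 2, 3, 4, 1, 0]]

instance : DecidableRel graphE.Adj := fun u v =>
  decidable_of_iff _ (SimpleGraph.fromRel_adj _ u v).symm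

lemma Dm_step : ∀ u v, u ≠ v → ∃ w, graphE.Adj w v ∧ Dm u w + 1 = Dm u v := by decide

lemma Dm_mono : ∀ u v w, graphE.Adj v w → Dm u w ≤ Dm u v + 1 := by decide

lemma Dm_diag : ∀ u, Dm u u = 0 := by decide

lemma Dm_walk : ∀ {u v : Fin 8} (p : graphE.Walk u v) (r : Fin 8),
    Dm r v ≤ Dm r u + p.length := by
  intro u v p
  induction p with
  | nil => simp
  | cons h p ih =>
    intro r
    have h1 := Dm_mono r _ _ h
    have h2 := ih r
    simp only [SimpleGraph.Walk.length_cons]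
    omega

lemma reach_aux : ∀ n u v, Dm u v = n → graphE.Reachable u v := by
  intro n
  induction n with
  | zero =>
    intro u v h
    have : u = v := by revert h; revert u v; decide
    exact this ▸ SimpleGraph.Reachable.refl u
  | succ n ih =>
    intro u v h
    have hne : u ≠ v := by rintro rfl; rw [Dm_diag] at h; omega
    obtain ⟨w, hadj, hw⟩ := Dm_step u v hne
    exact (ih u w (by omega)).trans hadj.reachable

lemma graphE_reachable (u v : Fin 8) : graphE.Reachable u v := reach_aux _ u v rfl

lemma graphE_connected : graphE.Connected :=
  ⟨fun u v => graphE_reachable u v⟩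

lemma dist_le_Dm_aux : ∀ n u v, Dm u v = n → graphE.dist u v ≤ Dm u v := by
  intro n
  induction n with
  | zero =>
    intro u v h
    have : u = v := by revert h; revert u v; decide
    subst this; simp [SimpleGraph.dist_self]
  | succ n ih =>
    intro u v h
    have hne : u ≠ v := by rintro rfl; rw [Dm_diag] at h; omega
    obtain ⟨w, hadj, hw⟩ := Dm_step u v hne
    have h1 : graphE.dist w v = 1 := SimpleGraph.dist_eq_one_iff_adj.mpr hadj
    calc graphE.dist u v ≤ graphE.dist u w + graphE.dist w v :=
          graphE_connected.dist_triangle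
    _ ≤ Dm u w + 1 := by rw [h1]; exact Nat.add_le_add_right (ih u w (by omega)) 1
    _ = Dm u v := hw

lemma dist_eq_Dm (u v : Fin 8) : graphE.dist u v = Dm u v := by
  refine le_antisymm (dist_le_Dm_aux _ u v rfl) ?_
  obtain ⟨p, hp⟩ := (graphE_reachable u v).exists_walk_length_eq_dist
  have := Dm_walk p u
  rw [Dm_diag, hp] at this
  omega

lemma dE_eq (x y : Pt) : dE x y = 0.013433 * (Dm (blkE x) (blkE y) : ℝ) := by
  rw [dE, dist_eq_Dm]

/-- `d^e` is a pseudometric consistent with `σ*`, the total client cost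
of facility `e` is `7 · M_e > 0`, and `e` minimizes the total client cost. -/
theorem dE_certificate :
    IsPseudometric dE ∧ Consistent dE sigmaStar ∧
      facCost dE 4 = 7 * 0.013433 ∧ 0 < facCost dE 4 ∧
      ∀ o : Fin 7, facCost dE 4 ≤ facCost dE o := by
  have hsymm : ∀ u v, Dm u v = Dm v u := by decide
  have htri : ∀ u v w, Dm u v ≤ Dm u w + Dm v w := by decide
  have hfc : ∀ o : Fin 7, facCost dE o =
      0.013433 * ((∑ j : Fin 7, Dm (blkE (Sum.inr o)) (blkE (Sum.inl j)) : ℕ) : ℝ) := by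
    intro o
    simp only [facCost, dE_eq, ← Finset.mul_sum, Nat.cast_sum]
  have hsum4 : (∑ j : Fin 7, Dm (blkE (Sum.inr 4)) (blkE (Sum.inl j))) = 7 := by decide
  refine ⟨⟨?_, ?_, ?_, ?_⟩, ?_, ?_, ?_, ?_⟩
  · intro x y; rw [dE_eq]; positivity
  · intro x y; rw [dE_eq, dE_eq, hsymm]
  · intro x; rw [dE_eq, Dm_diag]; simp
  · intro x y z
    rw [dE_eq, dE_eq, dE_eq]
    have := htri (blkE x) (blkE y) (blkE z)
    have : (Dm (blkE x) (blkE y) : ℝ) ≤ Dm (blkE x) (blkE z) + Dm (blkE y) (blkE z) := by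
      exact_mod_cast this
    nlinarith
  · intro j a b hab
    rw [dE_eq, dE_eq]
    have key : ∀ j a b : Fin 7, rkStar j a ≤ rkStar j b →
        Dm (blkE (Sum.inr a)) (blkE (Sum.inl j)) ≤ Dm (blkE (Sum.inr b)) (blkE (Sum.inl j)) := by
      decide
    have := key j a b hab
    have : (Dm (blkE (Sum.inr a)) (blkE (Sum.inl j)) : ℝ) ≤
        Dm (blkE (Sum.inr b)) (blkE (Sum.inl j)) := by exact_mod_cast this
    nlinarith
  · rw [hfc 4, hsum4]; norm_num
  · rw [hfc 4, hsum4]; norm_num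
  · intro o
    rw [hfc 4, hfc o, hsum4]
    have h7 : 7 ≤ ∑ j : Fin 7, Dm (blkE (Sum.inr o)) (blkE (Sum.inl j)) := by
      revert o; decide
    have h7' : (7 : ℝ) ≤ ((∑ j : Fin 7, Dm (blkE (Sum.inr o)) (blkE (Sum.inl j)) : ℕ) : ℝ) := by
      exact_mod_cast h7
    nlinarith
end
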